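/- arXiv:2305.05905 — 5 statements merged into one kernel-verified Lean document; each statement's English description precedes it below -/
import Mathlib

section
/- Let K be a field of characteristic 2, and let s₁,s₂,s₃,s₄ be the elementary symmetric polynomials in x₁,x₂,x₃,x₄ and Δ₄ the A₄-orbit sum of x₁³x₂²x₃. Then Δ₄² + (s₁²s₄ + s₁s₂s₃ + s₃²)Δ₄ = s₁⁴s₄² + s₁³s₃³ + s₁²s₂³s₄ + s₂³s₃² + s₃⁴ in K[x₁,x₂,x₃,x₄]. -/
/-!
Since the exponent vector `(3, 2, 1, 0)` has distinct entries, the twelve even permutations move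
`x₁³x₂²x₃` to twelve distinct monomials, so `Δ₄` is their sum. Substituting this and the
`sᵢ` as polynomials in the `xᵢ`, the two sides of the relation, computed over `ℤ`, differ by
twice an integer polynomial; hence they agree in characteristic 2.
-/

open MvPolynomial

/-- The `A₄`-orbit sum of the monomial `x₁³x₂²x₃`. -/
noncomputable def Delta4 (K : Type*) [CommRing K] : MvPolynomial (Fin 4) K :=
  letI : DecidableEq (MvPolynomial (Fin 4) K) := Classical.decEq _
  (Finset.univ.image (fun σ : alternatingGroup (Fin 4) =>
    rename (σ : Equiv.Perm (Fin 4)) (X 0 ^ 3 * X 1 ^ 2 * X 2))).sum id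

open Equiv

theorem MvPolynomial.rename_monomial_perm_injective {σ R : Type*} [CommSemiring R]
    {d : σ →₀ ℕ} (hd : Function.Injective d) {c : R} (hc : c ≠ 0) :
    Function.Injective fun e : Perm σ => rename e (monomial d c) := by
  intro e e' h
  have hmap := monomial_left_injective hc (by simpa only [rename_monomial] using h)
  ext i
  have hi := congr($hmap (e i))
  rw [Finsupp.mapDomain_apply e.injective, ← e'.apply_symm_apply (e i),
    Finsupp.mapDomain_apply e'.injective] at hi
  exact (e'.eq_symm_apply.mp (hd hi)).symm

theorem sum_alternatingGroup_fin_four {M : Type*} [AddCommMonoid M]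
    (f : Perm (Fin 4) → M) :
    ∑ g : alternatingGroup (Fin 4), f g =
      f 1 + f (c[0, 1] * c[2, 3]) + f (c[0, 2] * c[1, 3]) + f (c[0, 3] * c[1, 2]) +
      f c[0, 1, 2] + f c[0, 2, 1] + f c[0, 1, 3] + f c[0, 3, 1] +
      f c[0, 2, 3] + f c[0, 3, 2] + f c[1, 2, 3] + f c[1, 3, 2] := by
  rw [← Finset.sum_subtype {1, c[0, 1] * c[2, 3], c[0, 2] * c[1, 3], c[0, 3] * c[1, 2],
      c[0, 1, 2], c[0, 2, 1], c[0, 1, 3], c[0, 3, 1], c[0, 2, 3], c[0, 3, 2], c[1, 2, 3], c[1, 3, 2]}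
      (fun g => by rw [Perm.mem_alternatingGroup]; revert g; decide)]
  simp (disch := decide) only [Finset.sum_insert, Finset.sum_singleton]
  abel

theorem X_pow_three_mul_X_pow_two_mul_X_eq_monomial {R : Type*} [CommSemiring R] :
    (X 0 ^ 3 * X 1 ^ 2 * X 2 : MvPolynomial (Fin 4) R) =
      monomial (Finsupp.equivFunOnFinite.symm ![3, 2, 1, 0]) 1 := by
  rw [monomial_eq, Finsupp.prod_fintype _ _ fun _ => pow_zero _]
  simp [Fin.prod_univ_four]

theorem delta4_eq_sum (R : Type*) [CommRing R] [Nontrivial R] :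
    Delta4 R = ∑ g : alternatingGroup (Fin 4),
      rename (g : Perm (Fin 4)) (X 0 ^ 3 * X 1 ^ 2 * X 2) := by
  let _ := Classical.decEq (MvPolynomial (Fin 4) R)
  rw [Delta4]
  refine Finset.sum_image fun g _ g' _ h => Subtype.val_injective ?_
  rw [X_pow_three_mul_X_pow_two_mul_X_eq_monomial] at h
  exact rename_monomial_perm_injective (by decide) one_ne_zero h

theorem delta4_eq (R : Type*) [CommRing R] [Nontrivial R] :
    Delta4 R = X 0 ^ 3 * X 1 ^ 2 * X 2 + X 1 ^ 3 * X 0 ^ 2 * X 3 + X 2 ^ 3 * X 3 ^ 2 * X 0 +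
      X 3 ^ 3 * X 2 ^ 2 * X 1 + X 1 ^ 3 * X 2 ^ 2 * X 0 + X 2 ^ 3 * X 0 ^ 2 * X 1 +
      X 1 ^ 3 * X 3 ^ 2 * X 2 + X 3 ^ 3 * X 0 ^ 2 * X 2 + X 2 ^ 3 * X 1 ^ 2 * X 3 +
      X 3 ^ 3 * X 1 ^ 2 * X 0 + X 0 ^ 3 * X 2 ^ 2 * X 3 + X 0 ^ 3 * X 3 ^ 2 * X 1 := by
  rw [delta4_eq_sum, sum_alternatingGroup_fin_four fun g => rename g _]
  simp only [map_mul, map_pow, rename_X]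
  rfl

set_option maxHeartbeats 1000000 in
theorem CharTwo.quadratic_relation_of_a4_orbit_sum {R : Type*} [CommRing R] [CharP R 2]
    (a b c d : R) :
    let s : ℕ → R := fun i => Multiset.esymm ↑[a, b, c, d] i
    let Δ := a ^ 3 * b ^ 2 * c + b ^ 3 * a ^ 2 * d + c ^ 3 * d ^ 2 * a + d ^ 3 * c ^ 2 * b +
      b ^ 3 * c ^ 2 * a + c ^ 3 * a ^ 2 * b + b ^ 3 * d ^ 2 * c + d ^ 3 * a ^ 2 * c +
      c ^ 3 * b ^ 2 * d + d ^ 3 * b ^ 2 * a + a ^ 3 * c ^ 2 * d + a ^ 3 * d ^ 2 * b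
    Δ ^ 2 + (s 1 ^ 2 * s 4 + s 1 * s 2 * s 3 + s 3 ^ 2) * Δ
      = s 1 ^ 4 * s 4 ^ 2 + s 1 ^ 3 * s 3 ^ 3 + s 1 ^ 2 * s 2 ^ 3 * s 4
        + s 2 ^ 3 * s 3 ^ 2 + s 3 ^ 4 := by
  simp only [Multiset.esymm, Multiset.powersetCard_coe, List.sublistsLen, List.sublistsLenAux,
    Function.comp_apply, id_eq, List.map_cons, List.map_nil, Multiset.map_coe, Multiset.sum_coe,
    Multiset.prod_coe, List.sum_cons, List.sum_nil, List.prod_cons, List.prod_nil, add_zero,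
    mul_one]
  rw [← sub_eq_zero]
  ring_nf
  reduce_mod_char!

/-- In characteristic 2,
`Δ₄² + (s₁²s₄ + s₁s₂s₃ + s₃²)Δ₄ = s₁⁴s₄² + s₁³s₃³ + s₁²s₂³s₄ + s₂³s₃² + s₃⁴`,
where `sᵢ` are the elementary symmetric polynomials in `x₁,…,x₄`. -/
theorem delta4_quadratic_relation (K : Type*) [Field K] [CharP K 2] :
    letI s : ℕ → MvPolynomial (Fin 4) K := fun i => esymm (Fin 4) K i
    Delta4 K ^ 2 + (s 1 ^ 2 * s 4 + s 1 * s 2 * s 3 + s 3 ^ 2) * Delta4 K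
      = s 1 ^ 4 * s 4 ^ 2 + s 1 ^ 3 * s 3 ^ 3 + s 1 ^ 2 * s 2 ^ 3 * s 4
        + s 2 ^ 3 * s 3 ^ 2 + s 3 ^ 4 := by
  simp only [delta4_eq, esymm_eq_multiset_esymm, Fin.univ_val_map]
  exact CharTwo.quadratic_relation_of_a4_orbit_sum (X 0) (X 1) (X 2) (X 3)
end

section
/- Let K be an algebraically closed field of characteristic 2 and let f = E² + (A²D + ABC + C²)E + A⁴D² + A³C³ + A²B³D + B³C² + C⁴ in K[A,B,C,D,E]. Then f is irreducible. -/
/-!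
Regard `f` as the monic quadratic `E² + P E + Q` over `K[A,B,C,D]`. A factorization would be
`(E + s)(E + t)` with `s + t = P` and `s t = Q`. Specializing `(A, B, C, D) ↦ (T, 0, 1, 0)` sends
`P` to `1` and `Q` to `T³ + 1`, but two polynomials in `K[T]` with constant sum have a product of
even degree.
-/

open MvPolynomial

/-- The defining polynomial
`f = E² + (A²D+ABC+C²)E + A⁴D² + A³C³ + A²B³D + B³C² + C⁴`
of the quotient singularity `𝔸⁴/A₄` in characteristic 2, with variables
`A = X 0, B = X 1, C = X 2, D = X 3, E = X 4`. -/
noncomputable def quotientPoly (K : Type*) [CommRing K] : MvPolynomial (Fin 5) K :=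
  X 4 ^ 2 + (X 0 ^ 2 * X 3 + X 0 * X 1 * X 2 + X 2 ^ 2) * X 4
    + X 0 ^ 4 * X 3 ^ 2 + X 0 ^ 3 * X 2 ^ 3 + X 0 ^ 2 * X 1 ^ 3 * X 3
    + X 1 ^ 3 * X 2 ^ 2 + X 2 ^ 4

open Polynomial

namespace Polynomial

theorem even_natDegree_mul_of_add_eq_C {k : Type*} [CommRing k] [NoZeroDivisors k]
    {a b : k[X]} {c : k} (h : a + b = C c) : Even (a * b).natDegree := by
  rcases eq_or_ne a 0 with rfl | ha
  · simp
  rcases eq_or_ne b 0 with rfl | hb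
  · simp
  rw [natDegree_mul ha hb]
  obtain rfl : b = C c - a := eq_sub_of_add_eq' h
  rcases Nat.eq_zero_or_pos a.natDegree with ha0 | hapos
  · have hb0 : (C c - a).natDegree = 0 :=
      Nat.le_zero.mp ((natDegree_sub_le _ _).trans (by simp [ha0]))
    simp [ha0, hb0]
  · rw [natDegree_sub_eq_right_of_natDegree_lt (by simpa using hapos)]
    exact ⟨_, rfl⟩

theorem irreducible_X_sq_add_C_mul_X_add_C {R S : Type*} [CommRing R] [IsDomain R] [CommRing S]
    [NoZeroDivisors S] {p q : R} (φ : R →+* S[X]) (hp : (φ p).natDegree = 0)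
    (hq : Odd (φ q).natDegree) : Irreducible (X ^ 2 + C p * X + C q) := by
  have hm : (X ^ 2 + C p * X + C q).Monic := by monicity!
  have hd : (X ^ 2 + C p * X + C q).natDegree = 2 := by compute_degree!
  by_contra hirr
  obtain ⟨s, t, hst, hsum⟩ := (hm.not_irreducible_iff_exists_add_mul_eq_coeff hd).mp hirr
  replace hst : q = s * t := by simpa using hst
  replace hsum : p = s + t := by simpa using hsum
  have hconst : φ s + φ t = C ((φ p).coeff 0) := by
    rw [← map_add, ← hsum, ← eq_C_of_natDegree_eq_zero hp]
  have heven := even_natDegree_mul_of_add_eq_C hconst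
  rw [← map_mul, ← hst] at heven
  exact Nat.not_even_iff_odd.mpr hq heven

end Polynomial

namespace MvPolynomial

variable (R : Type*) [CommSemiring R] (n : ℕ)

noncomputable def lastEquiv : MvPolynomial (Fin (n + 1)) R ≃ₐ[R] (MvPolynomial (Fin n) R)[X] :=
  (renameEquiv R (finRotate (n + 1))).trans (finSuccEquiv R n)

variable {R n}

@[simp]
theorem lastEquiv_X_last : lastEquiv R n (X (Fin.last n)) = Polynomial.X := by
  simp [lastEquiv, finSuccEquiv_X_zero]

@[simp]
theorem lastEquiv_X_castSucc (i : Fin n) : lastEquiv R n (X i.castSucc) = Polynomial.C (X i) := by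
  have hrot : finRotate (n + 1) i.castSucc = i.succ :=
    Fin.ext (coe_finRotate_of_ne_last (Fin.castSucc_ne_last i))
  simp [lastEquiv, hrot, finSuccEquiv_X_succ]

theorem lastEquiv_rename_castSucc (p : MvPolynomial (Fin n) R) :
    lastEquiv R n (rename Fin.castSucc p) = Polynomial.C p := by
  change ((lastEquiv R n).toAlgHom.comp (rename Fin.castSucc)) p = (Polynomial.CAlgHom (R := R)) p
  congr 1
  exact algHom_ext fun i => by simp

end MvPolynomial

section

variable (K : Type*) [CommRing K]

noncomputable def quotientPolyCoeffE₁ : MvPolynomial (Fin 4) K :=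
  X 0 ^ 2 * X 3 + X 0 * X 1 * X 2 + X 2 ^ 2

noncomputable def quotientPolyCoeffE₀ : MvPolynomial (Fin 4) K :=
  X 0 ^ 4 * X 3 ^ 2 + X 0 ^ 3 * X 2 ^ 3 + X 0 ^ 2 * X 1 ^ 3 * X 3 + X 1 ^ 3 * X 2 ^ 2 + X 2 ^ 4

theorem quotientPoly_eq_rename :
    quotientPoly K = X (Fin.last 4) ^ 2
      + rename Fin.castSucc (quotientPolyCoeffE₁ K) * X (Fin.last 4)
      + rename Fin.castSucc (quotientPolyCoeffE₀ K) := by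
  simp only [quotientPoly, quotientPolyCoeffE₁, quotientPolyCoeffE₀, map_add, map_mul, map_pow,
    rename_X, Fin.isValue, Nat.reduceAdd, Fin.reduceLast, Fin.castSucc_zero, Fin.castSucc_one,
    Fin.reduceCastSucc]
  ring

theorem lastEquiv_quotientPoly :
    lastEquiv K 4 (quotientPoly K)
      = .X ^ 2 + .C (quotientPolyCoeffE₁ K) * .X + .C (quotientPolyCoeffE₀ K) := by
  simp only [quotientPoly_eq_rename, map_add, map_mul, map_pow, lastEquiv_X_last,
    lastEquiv_rename_castSucc]

end

theorem quotientPoly_irreducible_general (K : Type*) [Field K] :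
    Irreducible (quotientPoly K) := by
  rw [← MulEquiv.irreducible_iff (lastEquiv K 4), lastEquiv_quotientPoly]
  let ψ : MvPolynomial (Fin 4) K →ₐ[K] K[X] := aeval ![.X, 0, 1, 0]
  have hψ₁ : ψ (quotientPolyCoeffE₁ K) = 1 := by simp [ψ, quotientPolyCoeffE₁]
  have hψ₀ : ψ (quotientPolyCoeffE₀ K) = .X ^ 3 + 1 := by simp [ψ, quotientPolyCoeffE₀]
  refine irreducible_X_sq_add_C_mul_X_add_C ψ.toRingHom ?_ ?_
  · simp [hψ₁]
  · have hdeg : (Polynomial.X ^ 3 + 1 : K[X]).natDegree = 3 := by compute_degree!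
    simp only [AlgHom.toRingHom_eq_coe, RingHom.coe_coe, hψ₀, hdeg]
    decide

/-- Over an algebraically closed field of characteristic 2, `f` is irreducible. -/
theorem quotientPoly_irreducible (K : Type*) [Field K] [IsAlgClosed K] [CharP K 2] :
    Irreducible (quotientPoly K) :=
  quotientPoly_irreducible_general K
end

section
/- Let K be an algebraically closed field of characteristic 2. The image of the parametrization t ↦ (A,B,C,D,E) = (t₁+t₂, t₁²+t₁t₂, t₁³+t₁²t₂, t₁³t₂, t₁⁶+t₁⁵t₂+t₁⁴t₂²+t₁³t₂³) for (t₁,t₂) ∈ K² equals the closed set V(B² + AC, ABC + A²D + C², E + A²D + C²) ⊆ 𝔸⁵_K. -/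
/-! In characteristic 2, substituting `t₂ = A + t₁` turns the parametrization into
`(A, t₁A, t₁²A, t₁³A + t₁⁴, t₁³A³)`. Off `A = 0` a point of the variety is therefore recovered
from `t₁ = B/A`, the equations forcing `C`, `D` and `E`; on `A = 0` they force `B = C = E = 0`,
and `t₁ = t₂ = D^{1/4}` reaches the remaining coordinate. -/

open CharTwo

section CommRing

variable {R : Type*} [CommRing R]

def p2Param (t₁ t₂ : R) : R × R × R × R × R :=
  (t₁ + t₂, t₁ ^ 2 + t₁ * t₂, t₁ ^ 3 + t₁ ^ 2 * t₂, t₁ ^ 3 * t₂,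
    t₁ ^ 6 + t₁ ^ 5 * t₂ + t₁ ^ 4 * t₂ ^ 2 + t₁ ^ 3 * t₂ ^ 3)

variable (R) in
def p2Locus : Set (R × R × R × R × R) :=
  {p | p.2.1 ^ 2 + p.1 * p.2.2.1 = 0 ∧
    p.1 * p.2.1 * p.2.2.1 + p.1 ^ 2 * p.2.2.2.1 + p.2.2.1 ^ 2 = 0 ∧
    p.2.2.2.2 + p.1 ^ 2 * p.2.2.2.1 + p.2.2.1 ^ 2 = 0}

variable [CharP R 2]

theorem p2Param_add_left (t a : R) :
    p2Param t (a + t) = (a, t * a, t ^ 2 * a, t ^ 3 * a + t ^ 4, t ^ 3 * a ^ 3) := by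
  simp only [p2Param, Prod.mk.injEq]
  refine ⟨?_, ?_, ?_, ?_, ?_⟩
  · linear_combination t * two_eq_zero (R := R)
  · linear_combination t ^ 2 * two_eq_zero (R := R)
  · linear_combination t ^ 3 * two_eq_zero (R := R)
  · ring
  · linear_combination (2 * t ^ 6 + 3 * t ^ 5 * a + 2 * t ^ 4 * a ^ 2) * two_eq_zero (R := R)

theorem p2Param_mem_p2Locus (t₁ t₂ : R) : p2Param t₁ t₂ ∈ p2Locus R := by
  obtain ⟨a, rfl⟩ : ∃ a, t₂ = a + t₁ := ⟨t₂ - t₁, by ring⟩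
  rw [p2Param_add_left]
  refine ⟨?_, ?_, ?_⟩
  · linear_combination t₁ ^ 2 * a ^ 2 * two_eq_zero (R := R)
  · linear_combination (t₁ ^ 3 * a ^ 3 + t₁ ^ 4 * a ^ 2) * two_eq_zero (R := R)
  · linear_combination (t₁ ^ 3 * a ^ 3 + t₁ ^ 4 * a ^ 2) * two_eq_zero (R := R)

end CommRing

section Field

variable {K : Type*} [Field K] [CharP K 2]

theorem p2Param_div_add_div_of_ne_zero {a b c d e : K} (ha : a ≠ 0)
    (h : (a, b, c, d, e) ∈ p2Locus K) : p2Param (b / a) (a + b / a) = (a, b, c, d, e) := by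
  obtain ⟨t, rfl⟩ : ∃ t, b = t * a := ⟨b / a, (div_mul_cancel₀ b ha).symm⟩
  obtain ⟨h₁, h₂, h₃⟩ := h
  dsimp only at h₁ h₂ h₃
  obtain rfl : c = t ^ 2 * a := mul_left_cancel₀ ha <| by
    linear_combination h₁ - t ^ 2 * a ^ 2 * two_eq_zero (R := K)
  obtain rfl : d = t ^ 3 * a + t ^ 4 := mul_left_cancel₀ (pow_ne_zero 2 ha) <| by
    linear_combination h₂ - (t ^ 3 * a ^ 3 + t ^ 4 * a ^ 2) * two_eq_zero (R := K)
  obtain rfl : e = t ^ 3 * a ^ 3 := by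
    linear_combination h₃ - (t ^ 3 * a ^ 3 + t ^ 4 * a ^ 2) * two_eq_zero (R := K)
  rw [mul_div_cancel_right₀ t ha, p2Param_add_left]

theorem p2Param_self_of_pow_four_eq {t b c d e : K} (ht : t ^ 4 = d)
    (h : (0, b, c, d, e) ∈ p2Locus K) : p2Param t t = (0, b, c, d, e) := by
  obtain ⟨h₁, h₂, h₃⟩ := h
  dsimp only at h₁ h₂ h₃
  obtain rfl : b = 0 := pow_eq_zero_iff two_ne_zero |>.mp <| by linear_combination h₁
  obtain rfl : c = 0 := pow_eq_zero_iff two_ne_zero |>.mp <| by linear_combination h₂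
  obtain rfl : e = 0 := by linear_combination h₃
  simpa [ht] using p2Param_add_left t 0

end Field

/-- Over an algebraically closed field of characteristic 2, the image of the
parametrization
`(t₁,t₂) ↦ (A,B,C,D,E) = (t₁+t₂, t₁²+t₁t₂, t₁³+t₁²t₂, t₁³t₂, t₁⁶+t₁⁵t₂+t₁⁴t₂²+t₁³t₂³)`
equals the closed set `V(B²+AC, ABC+A²D+C², E+A²D+C²) ⊆ 𝔸⁵`. -/
theorem P2_parametrization (K : Type*) [Field K] [IsAlgClosed K] [CharP K 2] :
    {p : K × K × K × K × K | ∃ t₁ t₂ : K,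
        p = (t₁ + t₂, t₁ ^ 2 + t₁ * t₂, t₁ ^ 3 + t₁ ^ 2 * t₂, t₁ ^ 3 * t₂,
          t₁ ^ 6 + t₁ ^ 5 * t₂ + t₁ ^ 4 * t₂ ^ 2 + t₁ ^ 3 * t₂ ^ 3)}
      = {p : K × K × K × K × K |
          p.2.1 ^ 2 + p.1 * p.2.2.1 = 0 ∧
          p.1 * p.2.1 * p.2.2.1 + p.1 ^ 2 * p.2.2.2.1 + p.2.2.1 ^ 2 = 0 ∧
          p.2.2.2.2 + p.1 ^ 2 * p.2.2.2.1 + p.2.2.1 ^ 2 = 0} := by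
  ext ⟨a, b, c, d, e⟩
  constructor
  · rintro ⟨t₁, t₂, hp⟩
    exact hp ▸ p2Param_mem_p2Locus t₁ t₂
  · intro h
    by_cases ha : a = 0
    · subst ha
      obtain ⟨t, ht⟩ := IsAlgClosed.exists_pow_nat_eq d four_pos
      exact ⟨t, t, (p2Param_self_of_pow_four_eq ht h).symm⟩
    · exact ⟨b / a, a + b / a, (p2Param_div_add_div_of_ne_zero ha h).symm⟩
end

section
/- Let K be an algebraically closed field of characteristic 2. The affine variety R₀ = V(1 + r₁² + r₁ + w r₂³ + v r₂ + v² r₂²) ⊆ 𝔸⁴_K (coordinates w, v, r₁, r₂) is smooth. -/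
open MvPolynomial

theorem R0_smooth_general (K : Type*) [Field K] [CharP K 2] :
    letI g : MvPolynomial (Fin 4) K :=
      1 + X 2 ^ 2 + X 2 + X 0 * X 3 ^ 3 + X 1 * X 3 + X 1 ^ 2 * X 3 ^ 2
    ∀ p : Fin 4 → K, eval p g = 0 → ∃ i : Fin 4, eval p (pderiv i g) ≠ 0 := by
  intro p _
  -- `∂g/∂r₁ = 2 r₁ + 1`, which is the constant `1` in characteristic 2.
  refine ⟨2, ?_⟩
  have hpderiv : eval p (pderiv 2 (1 + X 2 ^ 2 + X 2 + X 0 * X 3 ^ 3 + X 1 * X 3 +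
      X 1 ^ 2 * X 3 ^ 2 : MvPolynomial (Fin 4) K)) = 2 * p 2 + 1 := by
    simp [pderiv_X]
  simp only [hpderiv, CharTwo.two_eq_zero, zero_mul, zero_add]
  exact one_ne_zero

/-- Over an algebraically closed field of characteristic 2, the hypersurface
`R₀ = V(1 + r₁² + r₁ + w·r₂³ + v·r₂ + v²·r₂²) ⊆ 𝔸⁴` (variables
`w = X 0, v = X 1, r₁ = X 2, r₂ = X 3`) is smooth: at every point of the
hypersurface some partial derivative of the defining polynomial is nonzero. -/
theorem R0_smooth (K : Type*) [Field K] [IsAlgClosed K] [CharP K 2] :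
    letI g : MvPolynomial (Fin 4) K :=
      1 + X 2 ^ 2 + X 2 + X 0 * X 3 ^ 3 + X 1 * X 3 + X 1 ^ 2 * X 3 ^ 2
    ∀ p : Fin 4 → K, eval p g = 0 → ∃ i : Fin 4, eval p (pderiv i g) ≠ 0 :=
  R0_smooth_general K
end

section
/- Let K be an algebraically closed field of characteristic 2 and let W₀ = V(w₁² + w₁w₂ + u v w₁ + w₂² + v³w₂ + u³) ⊆ 𝔸⁴_K with coordinates u, v, w₁, w₂. Then the singular locus of W₀ is exactly the curve {(u,v,w₁,w₂) : u = v², w₁ = v³, w₂ = v³}, which is a smooth irreducible curve isomorphic to 𝔸¹. -/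
/-!
In characteristic 2 the partial derivatives of `g` in `w₁, w₂, u` are `w₂ + uv`, `w₁ + v³` and
`u² + v w₁`. The first two force `w₂ = uv` and `w₁ = v³`, after which the third becomes the square
`(u + v²)²`, so `u = v²` in any reduced ring. Conversely `g` and all its partials vanish identically
along `v ↦ (v², v, v³, v³)`, which is injective since `v` is one of its coordinates.
-/

open MvPolynomial

namespace W0

variable {R : Type*} [CommRing R]

noncomputable def poly : MvPolynomial (Fin 4) R :=
  X 2 ^ 2 + X 2 * X 3 + X 0 * X 1 * X 2 + X 3 ^ 2 + X 1 ^ 3 * X 3 + X 0 ^ 3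

def curve (v : R) : Fin 4 → R := ![v ^ 2, v, v ^ 3, v ^ 3]

section curve

variable (v : R)

@[simp] theorem curve_zero : curve v 0 = v ^ 2 := rfl
@[simp] theorem curve_one : curve v 1 = v := rfl
@[simp] theorem curve_two : curve v 2 = v ^ 3 := rfl
@[simp] theorem curve_three : curve v 3 = v ^ 3 := rfl

end curve

theorem curve_injective : Function.Injective (curve : R → Fin 4 → R) :=
  fun _ _ h => congrFun h 1

theorem eval_poly (p : Fin 4 → R) :
    eval p poly = p 2 ^ 2 + p 2 * p 3 + p 0 * p 1 * p 2 + p 3 ^ 2 + p 1 ^ 3 * p 3 + p 0 ^ 3 := by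
  simp [poly]

theorem eval_pderiv_zero (p : Fin 4 → R) :
    eval p (pderiv 0 poly) = p 1 * p 2 + 3 * p 0 ^ 2 := by
  simp [poly, pderiv_X, mul_comm]

theorem eval_pderiv_one (p : Fin 4 → R) :
    eval p (pderiv 1 poly) = p 0 * p 2 + 3 * p 1 ^ 2 * p 3 := by
  simp [poly, pderiv_X, mul_comm]

theorem eval_pderiv_two (p : Fin 4 → R) :
    eval p (pderiv 2 poly) = 2 * p 2 + p 3 + p 0 * p 1 := by
  simp [poly, pderiv_X]

theorem eval_pderiv_three (p : Fin 4 → R) :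
    eval p (pderiv 3 poly) = p 2 + 2 * p 3 + p 1 ^ 3 := by
  simp [poly, pderiv_X]

variable [CharP R 2]

theorem eq_curve_of_eval_pderiv_eq_zero [IsReduced R] {p : Fin 4 → R}
    (h0 : eval p (pderiv 0 poly) = 0) (h2 : eval p (pderiv 2 poly) = 0)
    (h3 : eval p (pderiv 3 poly) = 0) : p = curve (p 1) := by
  have two : (2 : R) = 0 := CharTwo.two_eq_zero
  rw [eval_pderiv_zero] at h0
  rw [eval_pderiv_two] at h2
  rw [eval_pderiv_three] at h3
  have hw₁ : p 2 = p 1 ^ 3 := by linear_combination h3 - (p 3 + p 1 ^ 3) * two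
  have hw₂ : p 3 = p 0 * p 1 := by linear_combination h2 - (p 2 + p 0 * p 1) * two
  have hsq : (p 0 + p 1 ^ 2) ^ 2 = 0 := by
    linear_combination h0 - p 1 * hw₁ + (p 0 * p 1 ^ 2 - p 0 ^ 2) * two
  have hu : p 0 = p 1 ^ 2 := by
    linear_combination IsNilpotent.eq_zero ⟨2, hsq⟩ - p 1 ^ 2 * two
  funext i
  fin_cases i <;> simp [curve, hu, hw₁, hw₂, pow_succ]

theorem eval_curve (v : R) : eval (curve v) poly = 0 := by
  simp only [eval_poly, curve_zero, curve_one, curve_two, curve_three]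
  linear_combination 3 * v ^ 6 * CharTwo.two_eq_zero (R := R)

theorem eval_pderiv_curve (v : R) : ∀ i : Fin 4, eval (curve v) (pderiv i poly) = 0
  | 0 => by
    simp only [eval_pderiv_zero, curve_zero, curve_one, curve_two]
    linear_combination 2 * v ^ 4 * CharTwo.two_eq_zero (R := R)
  | 1 => by
    simp only [eval_pderiv_one, curve_zero, curve_one, curve_two, curve_three]
    linear_combination 2 * v ^ 5 * CharTwo.two_eq_zero (R := R)
  | 2 => by
    simp only [eval_pderiv_two, curve_zero, curve_one, curve_two, curve_three]
    linear_combination 2 * v ^ 3 * CharTwo.two_eq_zero (R := R)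
  | 3 => by
    simp only [eval_pderiv_three, curve_one, curve_two, curve_three]
    linear_combination 2 * v ^ 3 * CharTwo.two_eq_zero (R := R)

theorem singularLocus_eq_setOf_eq_curve [IsReduced R] :
    {p : Fin 4 → R | eval p poly = 0 ∧ ∀ i : Fin 4, eval p (pderiv i poly) = 0}
      = {p | ∃ v : R, p = curve v} := by
  ext p
  constructor
  · rintro ⟨-, hd⟩
    exact ⟨p 1, eq_curve_of_eval_pderiv_eq_zero (hd 0) (hd 2) (hd 3)⟩
  · rintro ⟨v, rfl⟩
    exact ⟨eval_curve v, eval_pderiv_curve v⟩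

end W0

theorem W0_singular_locus_general (K : Type*) [Field K] [CharP K 2] :
    letI g : MvPolynomial (Fin 4) K :=
      X 2 ^ 2 + X 2 * X 3 + X 0 * X 1 * X 2 + X 3 ^ 2 + X 1 ^ 3 * X 3 + X 0 ^ 3
    {p : Fin 4 → K | eval p g = 0 ∧ ∀ i : Fin 4, eval p (pderiv i g) = 0}
        = {p : Fin 4 → K | ∃ v : K, p = ![v ^ 2, v, v ^ 3, v ^ 3]} ∧
      Function.Injective (fun v : K => (![v ^ 2, v, v ^ 3, v ^ 3] : Fin 4 → K)) := by
  exact ⟨W0.singularLocus_eq_setOf_eq_curve, W0.curve_injective⟩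

/-- Over an algebraically closed field of characteristic 2, the singular locus
of `W₀ = V(w₁² + w₁w₂ + u·v·w₁ + w₂² + v³·w₂ + u³) ⊆ 𝔸⁴` (variables
`u = X 0, v = X 1, w₁ = X 2, w₂ = X 3`) is exactly the curve
`{(v², v, v³, v³) : v ∈ K}`, and this curve is a smooth irreducible curve
isomorphic to `𝔸¹` (the parametrization `v ↦ (v², v, v³, v³)` is injective). -/
theorem W0_singular_locus (K : Type*) [Field K] [IsAlgClosed K] [CharP K 2] :
    letI g : MvPolynomial (Fin 4) K :=
      X 2 ^ 2 + X 2 * X 3 + X 0 * X 1 * X 2 + X 3 ^ 2 + X 1 ^ 3 * X 3 + X 0 ^ 3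
    {p : Fin 4 → K | eval p g = 0 ∧ ∀ i : Fin 4, eval p (pderiv i g) = 0}
        = {p : Fin 4 → K | ∃ v : K, p = ![v ^ 2, v, v ^ 3, v ^ 3]} ∧
      Function.Injective (fun v : K => (![v ^ 2, v, v ^ 3, v ^ 3] : Fin 4 → K)) :=
  W0_singular_locus_general K
end
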